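/- For every t > 0, the 4×4 matrix M(t) with rows (1, t, t²/2, t³/6), (0, 1, t, t²/2), (0, 0, 1, t), (0, 0, 0, 1) is totally positive, i.e., every minor not forced to vanish by upper-triangularity is strictly positive. -/
import Mathlib


/-- An `n × n` real matrix is *upper-triangular totally positive* if every minor
with row indices `i₁ < ... < i_k` and column indices `j₁ < ... < j_k` satisfying
`i_l ≤ j_l` for all `l` is strictly positive. -/
def IsTotallyPositiveUT {n : ℕ} (M : Matrix (Fin n) (Fin n) ℝ) : Prop :=
  ∀ (k : ℕ) (r c : Fin k → Fin n), StrictMono r → StrictMono c →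
    (∀ l, r l ≤ c l) → 0 < (M.submatrix r c).det

noncomputable def Mt (t : ℝ) : Matrix (Fin 4) (Fin 4) ℝ :=
  !![(1:ℝ), t, t^2/2, t^3/6;
     0, 1, t, t^2/2;
     0, 0, 1, t;
     0, 0, 0, 1]

lemma fm2 (h : 2 < 4) : (⟨2,h⟩ : Fin 4) = 2 := rfl
lemma fm3 (h : 3 < 4) : (⟨3,h⟩ : Fin 4) = 3 := rfl

lemma k1 (t : ℝ) (ht : 0 < t) (a b : Fin 4) (hab : a ≤ b) : 0 < Mt t a b := by
  fin_cases a <;> fin_cases b <;>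
    first
      | (exfalso; revert hab; decide)
      | (simp [Mt, fm2, fm3, Matrix.vecHead, Matrix.vecTail] <;> positivity)

lemma k2 (t : ℝ) (ht : 0 < t) (a0 a1 b0 b1 : Fin 4)
    (ha : a0 < a1) (hb : b0 < b1) (h0 : a0 ≤ b0) (h1 : a1 ≤ b1) :
    0 < Mt t a0 b0 * Mt t a1 b1 - Mt t a0 b1 * Mt t a1 b0 := by
  fin_cases a0 <;> fin_cases a1 <;>
    first
      | (exfalso; revert ha; decide)
      | (fin_cases b0 <;> fin_cases b1 <;>
          first
            | (exfalso; revert ha hb h0 h1; decide)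
            | (simp [Mt, fm2, fm3, Matrix.vecHead, Matrix.vecTail] <;>
               nlinarith [pow_pos ht 2, pow_pos ht 3, pow_pos ht 4, ht]))

lemma k3 (t : ℝ) (ht : 0 < t) (a0 a1 a2 b0 b1 b2 : Fin 4)
    (ha1 : a0 < a1) (ha2 : a1 < a2) (hb1 : b0 < b1) (hb2 : b1 < b2)
    (h0 : a0 ≤ b0) (h1 : a1 ≤ b1) (h2 : a2 ≤ b2) :
    0 < Mt t a0 b0 * Mt t a1 b1 * Mt t a2 b2 - Mt t a0 b0 * Mt t a1 b2 * Mt t a2 b1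
      - Mt t a0 b1 * Mt t a1 b0 * Mt t a2 b2 + Mt t a0 b1 * Mt t a1 b2 * Mt t a2 b0
      + Mt t a0 b2 * Mt t a1 b0 * Mt t a2 b1 - Mt t a0 b2 * Mt t a1 b1 * Mt t a2 b0 := by
  fin_cases a0 <;> fin_cases a1 <;> fin_cases a2 <;>
    first
      | (exfalso; revert ha1 ha2; decide)
      | (fin_cases b0 <;> fin_cases b1 <;> fin_cases b2 <;>
          first
            | (exfalso; revert ha1 ha2 hb1 hb2 h0 h1 h2; decide)
            | (simp [Mt, fm2, fm3, Matrix.vecHead, Matrix.vecTail] <;>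
               nlinarith [pow_pos ht 2, pow_pos ht 3, pow_pos ht 4, ht]))

theorem totallyPositive_M34 (t : ℝ) (ht : 0 < t) :
    IsTotallyPositiveUT
      !![(1:ℝ), t, t^2/2, t^3/6;
         0, 1, t, t^2/2;
         0, 0, 1, t;
         0, 0, 0, 1] := by
  show IsTotallyPositiveUT (Mt t)
  intro k r c hr hc hle
  match k, r, c, hr, hc, hle with
  | 0, r, c, hr, hc, hle =>
      simp [Matrix.det_fin_zero]
  | 1, r, c, hr, hc, hle =>
      rw [Matrix.det_fin_one, Matrix.submatrix_apply]
      exact k1 t ht _ _ (hle 0)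
  | 2, r, c, hr, hc, hle =>
      rw [Matrix.det_fin_two]
      simp only [Matrix.submatrix_apply]
      exact k2 t ht _ _ _ _ (hr (by decide)) (hc (by decide)) (hle 0) (hle 1)
  | 3, r, c, hr, hc, hle =>
      rw [Matrix.det_fin_three]
      simp only [Matrix.submatrix_apply]
      exact k3 t ht _ _ _ _ _ _ (hr (by decide)) (hr (by decide)) (hc (by decide))
        (hc (by decide)) (hle 0) (hle 1) (hle 2)
  | 4, r, c, hr, hc, hle =>
      have hr01 : r 0 < r 1 := hr (by decide)
      have hr12 : r 1 < r 2 := hr (by decide)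
      have hr23 : r 2 < r 3 := hr (by decide)
      have hc01 : c 0 < c 1 := hc (by decide)
      have hc12 : c 1 < c 2 := hc (by decide)
      have hc23 : c 2 < c 3 := hc (by decide)
      have e : (Mt t).submatrix r c = Mt t := by
        have hr0 : r 0 = 0 := by omega
        have hr1 : r 1 = 1 := by omega
        have hr2 : r 2 = 2 := by omega
        have hr3 : r 3 = 3 := by omega
        have hc0 : c 0 = 0 := by omega
        have hc1 : c 1 = 1 := by omega
        have hc2 : c 2 = 2 := by omega
        have hc3 : c 3 = 3 := by omega
        ext i j
        fin_cases i <;> fin_cases j <;>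
          simp [Matrix.submatrix_apply, fm2, fm3, hr0, hr1, hr2, hr3, hc0, hc1, hc2, hc3]
      rw [e]
      have hdet : (Mt t).det = 1 := by
        simp [Mt, Matrix.det_succ_row_zero, Fin.sum_univ_succ]
      rw [hdet]
      norm_num
  | (n+5), r, c, hr, hc, hle =>
      have h := Fintype.card_le_of_injective r hr.injective
      simp at h
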